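/- arXiv:1811.00353 — 2 statements merged into one kernel-verified Lean document; each statement's English description precedes it below -/
import Mathlib

section
/- Let (F, ‖·‖) be a real normed space, (a_{ij})_{i,j≤n} a symmetric matrix with entries in F, g₁,…,g_n i.i.d. standard Gaussian N(0,1) random variables, and p ≥ 1. Set W = ‖Σ_{i≠j} a_{ij} g_i g_j‖_p + ‖Σ_i a_{ii}(g_i² − 1)‖_p. Then (1/3)·W ≤ ‖Σ_{ij} a_{ij}(g_i g_j − δ_{ij})‖_p ≤ W. -/
open MeasureTheory ProbabilityTheory Finset Real
open scoped ENNReal NNReal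

/-!
Write `Q = O + D` for the centered quadratic form and its off-diagonal and diagonal parts.
The upper bound is Minkowski's inequality. For the lower bound, flipping the signs of the
`gᵢ` does not change their joint law, and averaging `Q(ε • g)` over all sign vectors `ε`
kills the off-diagonal terms, leaving `D(g)`; hence `‖D‖_p ≤ ‖Q‖_p`, and then
`‖O‖_p ≤ ‖Q‖_p + ‖D‖_p ≤ 2 ‖Q‖_p`.
-/

section Signs

variable {ι : Type*} [Fintype ι] [DecidableEq ι]

lemma sum_units_smul_mul_smul (x : ι → ℝ) (i j : ι) :
    ∑ ε : ι → ℤˣ, (ε • x) i * (ε • x) j =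
      if i = j then Fintype.card (ι → ℤˣ) * x i ^ 2 else 0 := by
  split_ifs with hij
  · subst hij
    have h : ∀ ε : ι → ℤˣ, (ε • x) i * (ε • x) i = x i ^ 2 := fun ε => by
      rcases Int.units_eq_one_or (ε i) with h | h <;> simp [Pi.smul_apply', h, sq]
    rw [sum_congr rfl fun ε _ => h ε, sum_const, card_univ, nsmul_eq_mul]
  · set f : (ι → ℤˣ) → ℝ := fun ε => (ε • x) i * (ε • x) j
    -- flipping the sign of the `i`-th coordinate is a bijection reversing the sign of `f`
    have h : ∀ ε, f ε = -f (Pi.mulSingle i (-1) * ε) := fun ε => by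
      simp [f, Pi.smul_apply', Pi.mulSingle_eq_of_ne (Ne.symm hij), Units.smul_def]
    have := Fintype.sum_equiv (Equiv.mulLeft (Pi.mulSingle i (-1))) f (fun ε => -f ε) h
    rw [sum_neg_distrib] at this
    linarith

end Signs

section Chaos

variable {ι F : Type*} [Fintype ι] [NormedAddCommGroup F] [NormedSpace ℝ F]

def diagChaos (a : ι → ι → F) (x : ι → ℝ) : F :=
  ∑ i, (x i ^ 2 - 1) • a i i

variable [DecidableEq ι]

def quadraticChaos (a : ι → ι → F) (x : ι → ℝ) : F :=
  ∑ i, ∑ j, (x i * x j - if i = j then 1 else 0) • a i j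

def offDiagChaos (a : ι → ι → F) (x : ι → ℝ) : F :=
  ∑ i, ∑ j, (if i = j then 0 else x i * x j) • a i j

lemma quadraticChaos_eq_offDiagChaos_add_diagChaos (a : ι → ι → F) (x : ι → ℝ) :
    quadraticChaos a x = offDiagChaos a x + diagChaos a x := by
  simp only [quadraticChaos, offDiagChaos, diagChaos, ← sum_add_distrib]
  refine sum_congr rfl fun i _ => ?_
  have h : ∀ j, (x i * x j - if i = j then 1 else 0) • a i j =
      (if i = j then 0 else x i * x j) • a i j + if i = j then (x i ^ 2 - 1) • a i i else 0 := by
    intro j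
    split_ifs with hij
    · subst hij; simp [sq]
    · simp
  rw [sum_congr rfl fun j _ => h j, sum_add_distrib, sum_ite_eq]
  simp

lemma offDiagChaos_eq_sub (a : ι → ι → F) (x : ι → ℝ) :
    offDiagChaos a x = quadraticChaos a x - diagChaos a x :=
  eq_sub_of_add_eq (quadraticChaos_eq_offDiagChaos_add_diagChaos a x).symm

lemma continuous_quadraticChaos (a : ι → ι → F) : Continuous (quadraticChaos a) := by
  unfold quadraticChaos; fun_prop

lemma sum_quadraticChaos_units_smul (a : ι → ι → F) (x : ι → ℝ) :
    ∑ ε : ι → ℤˣ, quadraticChaos a (ε • x) = Fintype.card (ι → ℤˣ) • diagChaos a x := by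
  have h : ∀ i j, ∑ ε : ι → ℤˣ, ((ε • x) i * (ε • x) j - if i = j then 1 else 0) • a i j =
      if i = j then Fintype.card (ι → ℤˣ) • (x i ^ 2 - 1) • a i i else 0 := by
    intro i j
    rw [← sum_smul, sum_sub_distrib, sum_units_smul_mul_smul, sum_const, card_univ]
    split_ifs with hij
    · subst hij
      rw [nsmul_eq_mul, mul_one, ← Nat.cast_smul_eq_nsmul ℝ, smul_smul, mul_sub, mul_one]
    · simp
  simp only [quadraticChaos, diagChaos]
  rw [sum_comm]
  simp only [sum_comm (γ := ι → ℤˣ), h, sum_ite_eq, mem_univ, if_true, smul_sum]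

end Chaos

lemma ProbabilityTheory.IdentDistrib.eLpNorm_comp_eq {Ω Ω' E F : Type*} [MeasurableSpace Ω]
    [MeasurableSpace Ω'] [MeasurableSpace E] [NormedAddCommGroup F] {P : Measure Ω}
    {P' : Measure Ω'} {X : Ω → E} {Y : Ω' → E} (h : IdentDistrib X Y P P') {Φ : E → F}
    (hΦ : StronglyMeasurable Φ) (q : ℝ≥0∞) :
    eLpNorm (fun ω => Φ (X ω)) q P = eLpNorm (fun ω => Φ (Y ω)) q P' := by
  rw [← eLpNorm_norm, ← eLpNorm_norm (fun ω => Φ (Y ω))]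
  exact (h.comp hΦ.norm.measurable).eLpNorm_eq q

lemma ProbabilityTheory.iIndepFun.identDistrib_units_smul {Ω ι : Type*} [MeasurableSpace Ω]
    {P : Measure Ω} [Fintype ι] {g : ι → Ω → ℝ} (hg : ∀ i, Measurable (g i))
    (hind : iIndepFun g P) (hsymm : ∀ i, P.map (fun ω => -g i ω) = P.map (g i))
    (ε : ι → ℤˣ) : IdentDistrib (fun ω => ε • fun i => g i ω) (fun ω i => g i ω) P P := by
  have hε : iIndepFun (fun i ω => ε i • g i ω) P :=
    hind.comp (fun i x => ε i • x) fun i => measurable_const_smul _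
  have hmarg : ∀ i, P.map (fun ω => ε i • g i ω) = P.map (g i) := fun i => by
    rcases Int.units_eq_one_or (ε i) with h | h
    · simp [h]
    · simpa [h, Units.neg_smul] using hsymm i
  refine ⟨by fun_prop, by fun_prop, ?_⟩
  rw [show (fun ω => ε • fun i => g i ω) = fun ω i => ε i • g i ω from rfl,
    hε.map_fun_eq_pi_map fun i => by fun_prop, hind.map_fun_eq_pi_map fun i => by fun_prop]
  simp only [hmarg]

lemma map_neg_eq_of_map_eq_gaussianReal {Ω : Type*} [MeasurableSpace Ω] {P : Measure Ω}
    {X : Ω → ℝ} (hX : Measurable X) {v : ℝ≥0} (hlaw : P.map X = gaussianReal 0 v) :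
    P.map (fun ω => -X ω) = P.map X := by
  have h := Measure.map_map (μ := P) (g := fun x : ℝ => -x) measurable_neg hX
  rw [hlaw, gaussianReal_map_neg, neg_zero] at h
  rw [hlaw]
  exact h.symm

lemma MeasureTheory.MemLp.mul_of_two_mul {Ω : Type*} [MeasurableSpace Ω] {P : Measure Ω}
    {f h : Ω → ℝ} {q : ℝ≥0∞} (hf : MemLp f (2 * q) P) (hh : MemLp h (2 * q) P) :
    MemLp (fun ω => f ω * h ω) q P := by
  have : ENNReal.HolderTriple (2 * q) (2 * q) q :=
    ⟨by rw [ENNReal.mul_inv (by simp) (by simp), ← add_mul, ENNReal.inv_two_add_inv_two, one_mul]⟩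
  exact hh.mul' hf

lemma lpNorm_ofReal_eq_integral_rpow {α E : Type*} [MeasurableSpace α] [NormedAddCommGroup E]
    {μ : Measure α} {f : α → E} (hf : AEStronglyMeasurable f μ) {p : ℝ} (hp : 0 < p) :
    lpNorm f (ENNReal.ofReal p) μ = (∫ x, ‖f x‖ ^ p ∂μ) ^ (1 / p) := by
  rw [lpNorm_eq_integral_norm_rpow_toReal (by simpa using hp) ENNReal.ofReal_ne_top hf,
    ENNReal.toReal_ofReal hp.le, one_div]

section Moments

variable {Ω ι F : Type*} [MeasurableSpace Ω] {P : Measure Ω} [Fintype ι]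
  [NormedAddCommGroup F] [NormedSpace ℝ F] {G : Ω → ι → ℝ} {q : ℝ≥0∞}

lemma memLp_diagChaos [IsFiniteMeasure P] (hG : ∀ i, MemLp (fun ω => G ω i) (2 * q) P)
    (a : ι → ι → F) : MemLp (fun ω => diagChaos a (G ω)) q P :=
  memLp_finsetSum _ fun i _ => (memLp_top_const (a i i)).smul <| by
    simpa only [sq, Pi.sub_def] using ((hG i).mul_of_two_mul (hG i)).sub (memLp_const 1)

variable [DecidableEq ι]

lemma memLp_quadraticChaos [IsFiniteMeasure P] (hG : ∀ i, MemLp (fun ω => G ω i) (2 * q) P)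
    (a : ι → ι → F) : MemLp (fun ω => quadraticChaos a (G ω)) q P :=
  memLp_finsetSum _ fun i _ => memLp_finsetSum _ fun j _ =>
    (memLp_top_const (a i j)).smul (((hG i).mul_of_two_mul (hG j)).sub (memLp_const _))

lemma memLp_offDiagChaos [IsFiniteMeasure P] (hG : ∀ i, MemLp (fun ω => G ω i) (2 * q) P)
    (a : ι → ι → F) : MemLp (fun ω => offDiagChaos a (G ω)) q P := by
  simpa only [offDiagChaos_eq_sub, Pi.sub_def] using
    (memLp_quadraticChaos hG a).sub (memLp_diagChaos hG a)

lemma eLpNorm_diagChaos_le (hflip : ∀ ε : ι → ℤˣ, IdentDistrib (fun ω => ε • G ω) G P P)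
    (a : ι → ι → F) (hq : 1 ≤ q) :
    eLpNorm (fun ω => diagChaos a (G ω)) q P ≤ eLpNorm (fun ω => quadraticChaos a (G ω)) q P := by
  have hQ := continuous_quadraticChaos a
  refine (ENNReal.mul_le_mul_iff_right (a := (Fintype.card (ι → ℤˣ) : ℝ≥0∞))
    (by simp) (by simp)).1 ?_
  calc (Fintype.card (ι → ℤˣ) : ℝ≥0∞) * eLpNorm (fun ω => diagChaos a (G ω)) q P
      = eLpNorm (∑ ε : ι → ℤˣ, fun ω => quadraticChaos a (ε • G ω)) q P := by
        rw [← eLpNorm_nsmul]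
        congr 1
        ext ω
        simp only [Finset.sum_apply, Pi.smul_apply, sum_quadraticChaos_units_smul]
    _ ≤ ∑ ε : ι → ℤˣ, eLpNorm (fun ω => quadraticChaos a (ε • G ω)) q P :=
        eLpNorm_sum_le (fun ε _ =>
          hQ.comp_aestronglyMeasurable (hflip ε).aemeasurable_fst.aestronglyMeasurable) hq
    _ = Fintype.card (ι → ℤˣ) * eLpNorm (fun ω => quadraticChaos a (G ω)) q P := by
        rw [sum_congr rfl fun ε _ => (hflip ε).eLpNorm_comp_eq hQ.stronglyMeasurable q,
          sum_const, card_univ, nsmul_eq_mul]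

variable [IsFiniteMeasure P]

lemma lpNorm_quadraticChaos_le (hG : ∀ i, MemLp (fun ω => G ω i) (2 * q) P) (a : ι → ι → F)
    (hq : 1 ≤ q) :
    lpNorm (fun ω => quadraticChaos a (G ω)) q P ≤
      lpNorm (fun ω => offDiagChaos a (G ω)) q P + lpNorm (fun ω => diagChaos a (G ω)) q P := by
  simp only [quadraticChaos_eq_offDiagChaos_add_diagChaos]
  exact lpNorm_add_le' (memLp_diagChaos hG a) hq

lemma lpNorm_offDiagChaos_add_lpNorm_diagChaos_le
    (hG : ∀ i, MemLp (fun ω => G ω i) (2 * q) P)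
    (hflip : ∀ ε : ι → ℤˣ, IdentDistrib (fun ω => ε • G ω) G P P) (a : ι → ι → F)
    (hq : 1 ≤ q) :
    lpNorm (fun ω => offDiagChaos a (G ω)) q P + lpNorm (fun ω => diagChaos a (G ω)) q P ≤
      3 * lpNorm (fun ω => quadraticChaos a (G ω)) q P := by
  have hQ := memLp_quadraticChaos hG a
  have hD := memLp_diagChaos hG a
  have hdiag : lpNorm (fun ω => diagChaos a (G ω)) q P ≤
      lpNorm (fun ω => quadraticChaos a (G ω)) q P := by
    rw [← toReal_eLpNorm hD.1, ← toReal_eLpNorm hQ.1]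
    exact ENNReal.toReal_mono hQ.eLpNorm_ne_top (eLpNorm_diagChaos_le hflip a hq)
  have hoff : lpNorm (fun ω => offDiagChaos a (G ω)) q P ≤
      lpNorm (fun ω => quadraticChaos a (G ω)) q P + lpNorm (fun ω => diagChaos a (G ω)) q P := by
    simpa only [offDiagChaos_eq_sub, Pi.sub_def] using lpNorm_sub_le hQ hq
  linarith

end Moments

/-- Lemma 3.1: comparison of the moments of a centered Gaussian quadratic form
with the sum of the moments of its off-diagonal and diagonal parts. -/
theorem stmt_14 :
    ∀ (n : ℕ) (F : Type*) [NormedAddCommGroup F] [NormedSpace ℝ F],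
    ∀ (a : Fin n → Fin n → F), (∀ i j, a i j = a j i) →
    ∀ (Ω : Type*) [MeasurableSpace Ω] (P : Measure Ω) [IsProbabilityMeasure P],
    ∀ (g : Fin n → Ω → ℝ), (∀ i, Measurable (g i)) →
      iIndepFun g P →
      (∀ i, Measure.map (g i) P = gaussianReal 0 1) →
    ∀ p : ℝ, 1 ≤ p →
    ∀ W : ℝ,
      W = (∫ ω, ‖∑ i, ∑ j, (if i = j then 0 else g i ω * g j ω) • a i j‖ ^ p ∂P) ^ (1 / p)
          + (∫ ω, ‖∑ i, (g i ω ^ 2 - 1) • a i i‖ ^ p ∂P) ^ (1 / p) →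
    (1 / 3) * W ≤ (∫ ω, ‖∑ i, ∑ j, (g i ω * g j ω - if i = j then 1 else 0) • a i j‖ ^ p ∂P) ^ (1 / p) ∧ (∫ ω, ‖∑ i, ∑ j, (g i ω * g j ω - if i = j then 1 else 0) • a i j‖ ^ p ∂P) ^ (1 / p) ≤ W := by
  intro n F _ _ a _ Ω _ P _ g hg hind hlaw p hp W hW
  have hp0 : 0 < p := by linarith
  set q := ENNReal.ofReal p
  have hq : 1 ≤ q := by simpa [q] using hp
  have hG : ∀ i, MemLp (g i) (2 * q) P := fun i =>
    (memLp_map_measure_iff aestronglyMeasurable_id (hg i).aemeasurable).1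
      (hlaw i ▸ memLp_id_gaussianReal' _ (by finiteness))
  have hflip := hind.identDistrib_units_smul hg fun i =>
    map_neg_eq_of_map_eq_gaussianReal (hg i) (hlaw i)
  have hup := lpNorm_quadraticChaos_le hG a hq
  have hlow := lpNorm_offDiagChaos_add_lpNorm_diagChaos_le hG hflip a hq
  rw [lpNorm_ofReal_eq_integral_rpow (memLp_quadraticChaos hG a).1 hp0,
    lpNorm_ofReal_eq_integral_rpow (memLp_diagChaos hG a).1 hp0,
    lpNorm_ofReal_eq_integral_rpow (memLp_offDiagChaos hG a).1 hp0] at hup hlow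
  subst hW
  refine ⟨?_, hup⟩
  rw [one_div, inv_mul_le_iff₀ three_pos]
  exact hlow
end

section
/- There exists a universal constant C > 0 such that for every positive integer n, every real normed space (F, ‖·‖), every symmetric matrix (a_{ij})_{i,j≤n} with entries in F, and every p ≥ 1, one has √p · sup_{‖x‖₂≤1} E‖ Σ_i a_{ii} x_i g_i ‖ ≤ C·( E‖Σ_{ij} a_{ij}(g_i g_j − δ_{ij})‖ + √p · sup_{‖(x_{ij})‖₂≤1} ‖Σ_{ij} a_{ij} x_{ij}‖ + p · sup_{‖x‖₂≤1, ‖y‖₂≤1} ‖Σ_{ij} a_{ij} x_i y_j‖ ). -/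
open MeasureTheory ProbabilityTheory Finset Real
open scoped NNReal

/-!
The constant `C = 1` works, using only the middle term. Let `M` be the supremum of
`‖∑ x_ij a_ij‖` over the Frobenius unit ball. Applied to the diagonal array `x_ii = x_i g_i`,
homogeneity gives `‖∑ x_i g_i a_ii‖ ≤ √(∑ x_i² g_i²) · M`, and `E √(∑ x_i² g_i²) ≤ 1`
because `E g_i² = 1` and `∑ x_i² ≤ 1`.
-/

section Gaussian

variable {Ω : Type*} [MeasurableSpace Ω] {P : Measure Ω} {X : Ω → ℝ}

lemma integral_sq_gaussianReal_zero (v : ℝ≥0) : ∫ x, x ^ 2 ∂gaussianReal 0 v = v := by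
  rw [← variance_of_integral_eq_zero aemeasurable_id' integral_id_gaussianReal]
  exact variance_fun_id_gaussianReal

lemma integrable_sq_of_map_eq_gaussianReal {μ : ℝ} {v : ℝ≥0} (hX : AEMeasurable X P)
    (hlaw : P.map X = gaussianReal μ v) : Integrable (fun ω ↦ X ω ^ 2) P := by
  have hmem : MemLp id 2 (P.map X) := hlaw ▸ memLp_id_gaussianReal 2
  exact ((memLp_map_measure_iff aestronglyMeasurable_id hX).mp hmem).integrable_sq

lemma integral_sq_of_map_eq_gaussianReal {v : ℝ≥0} (hX : AEMeasurable X P)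
    (hlaw : P.map X = gaussianReal 0 v) : ∫ ω, X ω ^ 2 ∂P = v := by
  rw [← integral_sq_gaussianReal_zero v, ← hlaw]
  exact (integral_map hX (measurable_id.pow_const 2).aestronglyMeasurable).symm

end Gaussian

section UnitBall

variable {ι κ F : Type*} [Fintype ι] [Fintype κ] [NormedAddCommGroup F] [NormedSpace ℝ F]

lemma bddAbove_range_norm_sum_sum_smul (a : ι → κ → F) :
    BddAbove (Set.range fun x : {x : ι → κ → ℝ // ∑ i, ∑ j, x i j ^ 2 ≤ 1} ↦
      ‖∑ i, ∑ j, x.1 i j • a i j‖) := by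
  refine ⟨∑ i, ∑ j, ‖a i j‖, ?_⟩
  rintro _ ⟨⟨x, hx⟩, rfl⟩
  have hentry : ∀ i j, |x i j| ≤ 1 := fun i j ↦ by
    have hi : ∑ j, x i j ^ 2 ≤ ∑ i, ∑ j, x i j ^ 2 :=
      single_le_sum (f := fun i ↦ ∑ j, x i j ^ 2) (fun _ _ ↦ by positivity) (mem_univ i)
    have hij : x i j ^ 2 ≤ ∑ j, x i j ^ 2 :=
      single_le_sum (f := fun j ↦ x i j ^ 2) (fun _ _ ↦ by positivity) (mem_univ j)
    exact (sq_le_one_iff_abs_le_one _).mp (by linarith)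
  calc ‖∑ i, ∑ j, x i j • a i j‖ ≤ ∑ i, ∑ j, ‖x i j • a i j‖ :=
        (norm_sum_le _ _).trans (sum_le_sum fun i _ ↦ norm_sum_le _ _)
    _ ≤ ∑ i, ∑ j, ‖a i j‖ := by
        gcongr with i _ j _
        rw [norm_smul, Real.norm_eq_abs]
        exact mul_le_of_le_one_left (norm_nonneg _) (hentry i j)

lemma norm_sum_sum_smul_le_sqrt_mul {a : ι → κ → F} {M : ℝ}
    (hM : ∀ x : ι → κ → ℝ, ∑ i, ∑ j, x i j ^ 2 ≤ 1 → ‖∑ i, ∑ j, x i j • a i j‖ ≤ M)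
    (x : ι → κ → ℝ) : ‖∑ i, ∑ j, x i j • a i j‖ ≤ √(∑ i, ∑ j, x i j ^ 2) * M := by
  set q := ∑ i, ∑ j, x i j ^ 2
  have hq0 : 0 ≤ q := by positivity
  rcases (sqrt_nonneg q).eq_or_lt with hs | hs
  · have hx : x = 0 := by
      ext i j
      have := (sum_eq_zero_iff_of_nonneg fun _ _ ↦ by positivity).mp
        (sqrt_eq_zero hq0 |>.mp hs.symm) i (mem_univ i)
      exact pow_eq_zero_iff two_ne_zero |>.mp
        ((sum_eq_zero_iff_of_nonneg fun _ _ ↦ by positivity).mp this j (mem_univ j))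
    rw [← hs, zero_mul, hx]
    simp
  · have hunit : ∑ i, ∑ j, ((√q)⁻¹ * x i j) ^ 2 ≤ 1 := by
      simp_rw [mul_pow, ← mul_sum, inv_pow, sq_sqrt hq0]
      exact inv_mul_le_one_of_le₀ le_rfl hq0
    have := hM _ hunit
    simp_rw [← smul_smul, ← smul_sum, norm_smul, norm_inv] at this
    rwa [norm_of_nonneg hs.le, inv_mul_le_iff₀ hs] at this

lemma norm_sum_smul_diag_le_sqrt_mul [DecidableEq ι] {a : ι → ι → F} {M : ℝ}
    (hM : ∀ x : ι → ι → ℝ, ∑ i, ∑ j, x i j ^ 2 ≤ 1 → ‖∑ i, ∑ j, x i j • a i j‖ ≤ M)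
    (c : ι → ℝ) : ‖∑ i, c i • a i i‖ ≤ √(∑ i, c i ^ 2) * M := by
  have := norm_sum_sum_smul_le_sqrt_mul hM fun i j ↦ if i = j then c i else 0
  simpa only [ite_pow, ite_smul, zero_pow two_ne_zero, zero_smul, sum_ite_eq, mem_univ,
    if_true] using this

end UnitBall

lemma integral_norm_sum_smul_diag_le {ι Ω F : Type*} [Fintype ι] [DecidableEq ι]
    [NormedAddCommGroup F] [NormedSpace ℝ F] [MeasurableSpace Ω] {P : Measure Ω}
    [IsProbabilityMeasure P] {a : ι → ι → F} {M : ℝ}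
    (hM : ∀ x : ι → ι → ℝ, ∑ i, ∑ j, x i j ^ 2 ≤ 1 → ‖∑ i, ∑ j, x i j • a i j‖ ≤ M)
    {g : ι → Ω → ℝ} (hg_int : ∀ i, Integrable (fun ω ↦ g i ω ^ 2) P)
    (hg_moment : ∀ i, ∫ ω, g i ω ^ 2 ∂P ≤ 1) {x : ι → ℝ} (hx : ∑ i, x i ^ 2 ≤ 1) :
    ∫ ω, ‖∑ i, (x i * g i ω) • a i i‖ ∂P ≤ M := by
  have hM0 : 0 ≤ M := by simpa using hM 0 (by simp)
  have hq_int : Integrable (fun ω ↦ ∑ i, (x i * g i ω) ^ 2) P :=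
    integrable_finsetSum _ fun i _ ↦ by simpa only [mul_pow] using (hg_int i).const_mul _
  have hq_moment : ∫ ω, ∑ i, (x i * g i ω) ^ 2 ∂P ≤ 1 := by
    calc ∫ ω, ∑ i, (x i * g i ω) ^ 2 ∂P = ∑ i, x i ^ 2 * ∫ ω, g i ω ^ 2 ∂P := by
          rw [integral_finsetSum _ fun i _ ↦ by
            simpa only [mul_pow] using (hg_int i).const_mul (x i ^ 2)]
          simp only [mul_pow, integral_const_mul]
      _ ≤ ∑ i, x i ^ 2 := by
          gcongr with i
          exact mul_le_of_le_one_right (sq_nonneg _) (hg_moment i)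
      _ ≤ 1 := hx
  -- AM-GM `√q ≤ (q + 1) / 2` replaces `√q` by an integrable majorant.
  have hpointwise : ∀ ω, ‖∑ i, (x i * g i ω) • a i i‖ ≤ (∑ i, (x i * g i ω) ^ 2 + 1) / 2 * M :=
    fun ω ↦ (norm_sum_smul_diag_le_sqrt_mul hM _).trans <| by
      have hq0 : 0 ≤ ∑ i, (x i * g i ω) ^ 2 := by positivity
      gcongr
      nlinarith [sq_sqrt hq0, sq_nonneg (√(∑ i, (x i * g i ω) ^ 2) - 1)]
  calc ∫ ω, ‖∑ i, (x i * g i ω) • a i i‖ ∂P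
      ≤ ∫ ω, (∑ i, (x i * g i ω) ^ 2 + 1) / 2 * M ∂P :=
        integral_mono_of_nonneg (.of_forall fun _ ↦ norm_nonneg _)
          (((hq_int.add (integrable_const 1)).div_const 2).mul_const M) (.of_forall hpointwise)
    _ = (∫ ω, ∑ i, (x i * g i ω) ^ 2 ∂P + 1) / 2 * M := by
        rw [integral_mul_const, integral_div, integral_add hq_int (integrable_const 1)]
        simp
    _ ≤ M := mul_le_of_le_one_left hM0 (by linarith)

/-- Proposition 4.2: the diagonal term `√p sup_x E‖Σ a_ii x_i g_i‖` is dominated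
by the parameters appearing in the main estimates. -/
theorem stmt_16 :
    ∃ C : ℝ, 0 < C ∧
    ∀ (n : ℕ), 0 < n →
    ∀ (F : Type*) [NormedAddCommGroup F] [NormedSpace ℝ F],
    ∀ (a : Fin n → Fin n → F), (∀ i j, a i j = a j i) →
    ∀ (Ω : Type*) [MeasurableSpace Ω] (P : Measure Ω) [IsProbabilityMeasure P],
    ∀ (g : Fin n → Ω → ℝ), (∀ i, Measurable (g i)) →
      iIndepFun g P →
      (∀ i, Measure.map (g i) P = gaussianReal 0 1) →
    ∀ p : ℝ, 1 ≤ p →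
    Real.sqrt p * (⨆ x : {x : Fin n → ℝ // ∑ i, x i ^ 2 ≤ 1},
        ∫ ω, ‖∑ i, (x.1 i * g i ω) • a i i‖ ∂P)
      ≤ C * ((∫ ω, ‖∑ i, ∑ j, (g i ω * g j ω - if i = j then 1 else 0) • a i j‖ ∂P)
             + Real.sqrt p * (⨆ x : {x : Fin n → Fin n → ℝ // ∑ i, ∑ j, x i j ^ 2 ≤ 1},
            ‖∑ i, ∑ j, x.1 i j • a i j‖)
             + p * (⨆ xy : {xy : (Fin n → ℝ) × (Fin n → ℝ) //
                (∑ i, xy.1 i ^ 2 ≤ 1) ∧ (∑ i, xy.2 i ^ 2 ≤ 1)},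
            ‖∑ i, ∑ j, (xy.1.1 i * xy.1.2 j) • a i j‖)) := by
  refine ⟨1, one_pos, fun n _ F _ _ a _ Ω _ P _ g hg_meas _ hg_law p hp ↦ ?_⟩
  set M := ⨆ x : {x : Fin n → Fin n → ℝ // ∑ i, ∑ j, x i j ^ 2 ≤ 1}, ‖∑ i, ∑ j, x.1 i j • a i j‖
  have hM : ∀ x : Fin n → Fin n → ℝ, ∑ i, ∑ j, x i j ^ 2 ≤ 1 → ‖∑ i, ∑ j, x i j • a i j‖ ≤ M :=
    fun x hx ↦ le_ciSup (bddAbove_range_norm_sum_sum_smul a) ⟨x, hx⟩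
  have hdiag : (⨆ x : {x : Fin n → ℝ // ∑ i, x i ^ 2 ≤ 1},
      ∫ ω, ‖∑ i, (x.1 i * g i ω) • a i i‖ ∂P) ≤ M := by
    have : Nonempty {x : Fin n → ℝ // ∑ i, x i ^ 2 ≤ 1} := ⟨⟨0, by simp⟩⟩
    exact ciSup_le fun x ↦ integral_norm_sum_smul_diag_le hM
      (fun i ↦ integrable_sq_of_map_eq_gaussianReal (hg_meas i).aemeasurable (hg_law i))
      (fun i ↦ (integral_sq_of_map_eq_gaussianReal (hg_meas i).aemeasurable (hg_law i)).le)
      x.2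
  have hchaos : 0 ≤ ∫ ω, ‖∑ i, ∑ j, (g i ω * g j ω - if i = j then 1 else 0) • a i j‖ ∂P :=
    integral_nonneg fun _ ↦ norm_nonneg _
  have hoperator : 0 ≤ p * ⨆ xy : {xy : (Fin n → ℝ) × (Fin n → ℝ) //
      (∑ i, xy.1 i ^ 2 ≤ 1) ∧ (∑ i, xy.2 i ^ 2 ≤ 1)}, ‖∑ i, ∑ j, (xy.1.1 i * xy.1.2 j) • a i j‖ :=
    mul_nonneg (by linarith) (Real.iSup_nonneg fun _ ↦ norm_nonneg _)
  have := mul_le_mul_of_nonneg_left hdiag (sqrt_nonneg p)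
  linarith
end
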